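/- arXiv:1403.4408 — 4 statements merged into one kernel-verified Lean document; each statement's English description precedes it below -/
import Mathlib

section
/- The point (X*, Y*, Z*) with X* = Ads/V, Y* = wAdrW/V², Z* = vAsrW/V², where Q = sv+cdw, V = BQ−ds, W = BQ−ds(A+1), is an equilibrium of the system X' = r(1−X)X − cBXY/(X+A) − BXZ/(X+A), Y' = w(cY+Z)BX/(X+A) − sY, Z' = v(cY+Z)BX/(X+A) − dZ; i.e., all three right-hand sides vanish at this point. -/
/-!
At `X* = A d s / V` the Holling type II response `B X / (X + A)` equals `d s / Q`, and the
weighted predator density is `c Y* + Z* = r A Q W / V²`. With these two values the `Y`- and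
`Z`-equations balance term by term, and the `X`-equation reduces to `(1 - X*) X* = A d s W / V²`,
which is the identity `V - A d s = W`.
-/

lemma holling_response_eq {A B Q d s : ℝ} (hA : A ≠ 0) (hB : B ≠ 0) (hQ : Q ≠ 0)
    (hV : B * Q - d * s ≠ 0) :
    B * (A * d * s / (B * Q - d * s)) / (A * d * s / (B * Q - d * s) + A) = d * s / Q := by
  have hXA : A * d * s / (B * Q - d * s) + A = A * (B * Q) / (B * Q - d * s) := by
    field_simp
    ring
  rw [hXA]
  field_simp

lemma logistic_factor_eq {A B Q d s : ℝ} (hV : B * Q - d * s ≠ 0) :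
    (1 - A * d * s / (B * Q - d * s)) * (A * d * s / (B * Q - d * s)) =
      A * d * s * (B * Q - d * s * (A + 1)) / (B * Q - d * s) ^ 2 := by
  field_simp
  ring

theorem stmt_0_general (r c w s v d B A : ℝ)
    (hc : 0 < c) (hw : 0 < w) (hs : 0 < s) (hv : 0 < v)
    (hd : 0 < d) (hB : 0 < B) (hA : 0 < A)
    (hV : B * (s * v + c * d * w) - d * s ≠ 0) :
    let Q := s * v + c * d * w
    let V := B * Q - d * s
    let W := B * Q - d * s * (A + 1)
    let X := A * d * s / V
    let Y := w * A * d * r * W / V ^ 2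
    let Z := v * A * s * r * W / V ^ 2
    r * (1 - X) * X - c * (B * X / (X + A)) * Y - (B * X / (X + A)) * Z = 0 ∧
    w * (c * Y + Z) * (B * X / (X + A)) - s * Y = 0 ∧
    v * (c * Y + Z) * (B * X / (X + A)) - d * Z = 0 := by
  intro Q V W X Y Z
  have hQ : Q ≠ 0 := by positivity
  have hP : B * X / (X + A) = d * s / Q := holling_response_eq hA.ne' hB.ne' hQ hV
  have hsum : c * Y + Z = r * A * Q * W / V ^ 2 := by
    simp only [Y, Z, Q]
    ring
  have hlog : (1 - X) * X = A * d * s * W / V ^ 2 := logistic_factor_eq hV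
  rw [hP]
  refine ⟨?_, ?_, ?_⟩
  · linear_combination (norm := skip) r * hlog - d * s / Q * hsum
    field_simp
    ring
  · rw [hsum]
    simp only [Y]
    field_simp
    ring
  · rw [hsum]
    simp only [Z]
    field_simp
    ring

theorem stmt_0 (r c w s v d B A : ℝ)
    (hr : 0 < r) (hc : 0 < c) (hw : 0 < w) (hs : 0 < s) (hv : 0 < v)
    (hd : 0 < d) (hB : 0 < B) (hA : 0 < A)
    (hV : B * (s * v + c * d * w) - d * s ≠ 0) :
    let Q := s * v + c * d * w
    let V := B * Q - d * s
    let W := B * Q - d * s * (A + 1)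
    let X := A * d * s / V
    let Y := w * A * d * r * W / V ^ 2
    let Z := v * A * s * r * W / V ^ 2
    r * (1 - X) * X - c * (B * X / (X + A)) * Y - (B * X / (X + A)) * Z = 0 ∧
    w * (c * Y + Z) * (B * X / (X + A)) - s * Y = 0 ∧
    v * (c * Y + Z) * (B * X / (X + A)) - d * Z = 0 :=
  stmt_0_general r c w s v d B A hc hw hs hv hd hB hA hV
end

section
/- If A + 1 > B*(s*v + c*d*w)/(d*s), then both m₁ = ((s+d)*(A+1) − B*(w*c+v))/(A+1) > 0 and m₀ = (d*s*(A+1) − B*(s*v + c*d*w))/(A+1) > 0, and consequently both roots of λ² + m₁λ + m₀ = 0 have negative real part. -/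
theorem stmt_4 (c w s v d B A : ℝ)
    (hc : 0 < c) (hw : 0 < w) (hs : 0 < s) (hv : 0 < v)
    (hd : 0 < d) (hB : 0 < B) (hA : 0 < A)
    (h : A + 1 > B * (s * v + c * d * w) / (d * s)) :
    let m₁ := ((s + d) * (A + 1) - B * (w * c + v)) / (A + 1)
    let m₀ := (d * s * (A + 1) - B * (s * v + c * d * w)) / (A + 1)
    0 < m₁ ∧ 0 < m₀ ∧
      ∀ z : ℂ, z ^ 2 + (m₁ : ℂ) * z + (m₀ : ℂ) = 0 → z.re < 0 := by
  intro m₁ m₀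
  have hA1 : (0:ℝ) < A + 1 := by linarith
  have hds : (0:ℝ) < d * s := mul_pos hd hs
  have hnum0 : B * (s * v + c * d * w) < d * s * (A + 1) := by
    rw [gt_iff_lt, div_lt_iff₀ hds] at h
    nlinarith
  have hm0 : 0 < m₀ := div_pos (by linarith) hA1
  have hnum1 : B * (w * c + v) < (s + d) * (A + 1) := by
    nlinarith [mul_pos hB (mul_pos hv (mul_pos hs hs)),
      mul_pos (mul_pos hB hc) (mul_pos hw (mul_pos hd hd))]
  have hm1 : 0 < m₁ := div_pos (by linarith) hA1
  refine ⟨hm1, hm0, ?_⟩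
  intro z hz
  set x := z.re with hx
  set y := z.im with hy
  have hre : x * x - y * y + m₁ * x + m₀ = 0 := by
    have := congrArg Complex.re hz
    simpa [pow_two, Complex.add_re, Complex.mul_re] using this
  have him : x * y + y * x + m₁ * y = 0 := by
    have := congrArg Complex.im hz
    simpa [pow_two, Complex.add_im, Complex.mul_im] using this
  by_contra hxn
  push_neg at hxn
  have hy2 : y ^ 2 * (2 * x + m₁) = 0 := by nlinarith [him]
  have h2x : 0 < 2 * x + m₁ := by linarith
  have : y ^ 2 = 0 := by
    rcases mul_eq_zero.mp hy2 with h' | h'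
    · exact h'
    · linarith
  nlinarith [this, hre]
end

section
/- If r*d*s ≤ B*(s²*v + c*d²*w) and V = B*(sv+cdw) − ds > 0, then for every A with 0 < A < V/(ds), the quantity a₁ = (V*B*(s²v+cd²w) + r*d*s*(A*B*Q − W))/(V*B*Q) is positive, where Q = sv+cdw and W = BQ − ds(A+1). -/
theorem stmt_9 (r c w s v d B : ℝ)
    (hr : 0 < r) (hc : 0 < c) (hw : 0 < w) (hs : 0 < s) (hv : 0 < v)
    (hd : 0 < d) (hB : 0 < B)
    (h : r * d * s ≤ B * (s ^ 2 * v + c * d ^ 2 * w))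
    (hV : 0 < B * (s * v + c * d * w) - d * s) :
    ∀ A : ℝ, 0 < A → A < (B * (s * v + c * d * w) - d * s) / (d * s) →
      let Q := s * v + c * d * w
      let V := B * Q - d * s
      let W := B * Q - d * s * (A + 1)
      0 < (V * B * (s ^ 2 * v + c * d ^ 2 * w) + r * d * s * (A * B * Q - W)) /
          (V * B * Q) := by
  intro A hA hA' Q V W
  have hQ : 0 < Q := by positivity
  have hden : 0 < V * B * Q := by positivity
  apply div_pos _ hden
  have hS : 0 < s ^ 2 * v + c * d ^ 2 * w := by positivity
  have key : A * B * Q - W = B * Q * (A - 1) + d * s * (A + 1) := by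
    simp only [W, Q]; ring
  rcases le_or_gt 0 (A * B * Q - W) with hcase | hcase
  · have : 0 ≤ r * d * s * (A * B * Q - W) := by positivity
    nlinarith [mul_pos (mul_pos hV hB) hS]
  · have h2 : B * (s ^ 2 * v + c * d ^ 2 * w) * (A * B * Q - W) ≤
        r * d * s * (A * B * Q - W) :=
      mul_le_mul_of_nonpos_right h hcase.le
    have h3 : V + (A * B * Q - W) = A * (B * Q + d * s) := by
      simp only [V, W]; ring
    have h4 : 0 < B * (s ^ 2 * v + c * d ^ 2 * w) * (A * (B * Q + d * s)) :=
      mul_pos (mul_pos hB hS) (mul_pos hA (by positivity))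
    calc (0:ℝ) < B * (s ^ 2 * v + c * d ^ 2 * w) * (A * (B * Q + d * s)) := h4
      _ = V * B * (s ^ 2 * v + c * d ^ 2 * w)
          + B * (s ^ 2 * v + c * d ^ 2 * w) * (A * B * Q - W) := by
            rw [← h3]; ring
      _ ≤ V * B * (s ^ 2 * v + c * d ^ 2 * w) + r * d * s * (A * B * Q - W) := by
            linarith
end

section
/- If B*Q ≥ 3*d*s and M < 0 (with M, H as defined), then H*d*s < M*V, where V = B*Q − d*s; i.e., H/M > V/(ds). Equivalently, M*V − H*d*s = B*(s²v+cd²w)*(B*Q − 2*d*s) + d*s*((s+d)*B*Q − B*(wc+v)*d*s) > 0. -/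
theorem stmt_13 (c w s v d B : ℝ)
    (hc : 0 < c) (hw : 0 < w) (hs : 0 < s) (hv : 0 < v)
    (hd : 0 < d) (hB : 0 < B)
    (h : B * (s * v + c * d * w) ≥ 3 * (d * s))
    (hM : B * (s ^ 2 * v + c * d ^ 2 * w)
      + d * s * ((s + d) - B * (w * c + v)) < 0) :
    let Q := s * v + c * d * w
    let V := B * Q - d * s
    let M := B * (s ^ 2 * v + c * d ^ 2 * w) + d * s * ((s + d) - B * (w * c + v))
    let H := B * (s ^ 2 * v + c * d ^ 2 * w) + B * (w * c + v) * (2 * (d * s) - B * Q)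
      - (s + d) * (d * s)
    H * (d * s) < M * V ∧ H / M > V / (d * s) ∧
      M * V - H * (d * s) =
        B * (s ^ 2 * v + c * d ^ 2 * w) * (B * Q - 2 * (d * s)) +
          d * s * ((s + d) * (B * Q) - B * (w * c + v) * (d * s)) := by
  intro Q V M H
  have hds : 0 < d * s := mul_pos hd hs
  have hA : 0 < s ^ 2 * v + c * d ^ 2 * w := by positivity
  have hBA : 0 < B * (s ^ 2 * v + c * d ^ 2 * w) := mul_pos hB hA
  have hid : (s + d) * Q - (w * c + v) * (d * s) = s ^ 2 * v + c * d ^ 2 * w := by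
    simp only [Q]; ring
  have hkey : M * V - H * (d * s) =
      B * (s ^ 2 * v + c * d ^ 2 * w) * (B * Q - 2 * (d * s)) +
        d * s * ((s + d) * (B * Q) - B * (w * c + v) * (d * s)) := by
    simp only [M, V, H]; ring
  have h1 : 0 < B * Q - 2 * (d * s) := by
    have : (3 : ℝ) * (d * s) ≤ B * Q := h
    nlinarith
  have h2 : (s + d) * (B * Q) - B * (w * c + v) * (d * s)
      = B * (s ^ 2 * v + c * d ^ 2 * w) := by
    rw [← hid]; ring
  have hpos : 0 < M * V - H * (d * s) := by
    rw [hkey, h2]; positivity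
  have hlt : H * (d * s) < M * V := by linarith
  refine ⟨hlt, ?_, hkey⟩
  have hMne : M ≠ 0 := ne_of_lt hM
  have hdsM : d * s * M < 0 := mul_neg_of_pos_of_neg hds hM
  have hdif : V / (d * s) - H / M = (V * M - H * (d * s)) / (d * s * M) := by
    field_simp
  have hnum : 0 < V * M - H * (d * s) := by nlinarith
  have : V / (d * s) - H / M < 0 := by
    rw [hdif]; exact div_neg_of_pos_of_neg hnum hdsM
  linarith
end
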